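/- arXiv:1809.04138 — 2 statements merged into one kernel-verified Lean document; each statement's English description precedes it below -/
import Mathlib

section
/- Let D ⊆ ℝ^k be the set D := {p_k < 0} ∪ {p_k = 0, p_{k-1} < 0} ∪ ⋯ ∪ {p_k = ⋯ = p₂ = 0, p₁ < 1}. Let φ₁,…,φ_k : (0,∞) → (0,∞) be continuous, increasing, tending to ∞, with ∫e^{−cφᵢ}dx < ∞ for all c > 0 and all i, and with φᵢ^κ < φ_{i+1} for some κ > 1 and all i. Let λ = (1/Z)e^{−φ₁}dx. Then for (p₁,…,p_k) ∈ ℝ^k, the integral ∫ e^{p₁φ₁+⋯+p_kφ_k} dλ is finite if and only if (p₁,…,p_k) ∈ D. -/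
/-!
With respect to Lebesgue measure the integrand is `exp (∑ qᵢ φᵢ)` with `q = p - e₀`. The growth
condition `φᵢ ^ κ < φᵢ₊₁` makes `φᵢ = o(φᵢ₊₁)`, so for the last index `i` with `qᵢ ≠ 0` the
exponent is `qᵢ φᵢ + o(φᵢ)`. If `qᵢ < 0` the integrand is eventually dominated by the integrable
`exp (qᵢ φᵢ / 2)`, and monotonicity of the `φⱼ` bounds it on every `(0, X]`; otherwise the
exponent is eventually nonnegative and the integral over `(0, ∞)` diverges.
-/

open MeasureTheory Set Real Filter Asymptotics
open scoped ENNReal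

section Asymptotics

variable {α : Type*} {l : Filter α}

lemma isLittleO_id_rpow_atTop {κ : ℝ} (hκ : 1 < κ) :
    (fun x : ℝ => x) =o[atTop] fun x => x ^ κ := by
  refine (isLittleO_iff_tendsto' ?_).2 ?_
  · filter_upwards [eventually_gt_atTop 0] with x hx h
    exact absurd h (rpow_pos_of_pos hx κ).ne'
  · refine (tendsto_rpow_neg_atTop (sub_pos.2 hκ)).congr' ?_
    filter_upwards [eventually_gt_atTop 0] with x hx
    rw [neg_sub, rpow_sub hx, rpow_one]

lemma isLittleO_of_rpow_le {f g : α → ℝ} {κ : ℝ} (hκ : 1 < κ) (hf : Tendsto f l atTop)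
    (hfg : ∀ᶠ x in l, f x ^ κ ≤ g x) : f =o[l] g := by
  refine ((isLittleO_id_rpow_atTop hκ).comp_tendsto hf).trans_isBigO (IsBigO.of_bound 1 ?_)
  filter_upwards [hfg, hf.eventually_ge_atTop 0] with x hle hf0
  have hpow : 0 ≤ f x ^ κ := rpow_nonneg hf0 κ
  simpa [abs_of_nonneg hpow, abs_of_nonneg (hpow.trans hle)] using hle

lemma isLittleO_of_lt_of_isLittleO_succ {n : ℕ} {φ : Fin (n + 1) → α → ℝ}
    (h : ∀ i : Fin n, φ i.castSucc =o[l] φ i.succ) {i j : Fin (n + 1)} (hij : i < j) :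
    φ i =o[l] φ j :=
  haveI : IsTrans (α → ℝ) (fun f g => f =o[l] g) := ⟨fun _ _ _ => IsLittleO.trans⟩
  (Fin.liftFun_iff_succ (fun f g : α → ℝ => f =o[l] g)).2 h hij

variable {ι : Type*} [Fintype ι] [LinearOrder ι] {φ : ι → α → ℝ} {q : ι → ℝ} {i : ι}

lemma isLittleO_sum_sub_leading (hφ : ∀ i j, i < j → φ i =o[l] φ j)
    (hq : ∀ j, i < j → q j = 0) :
    (fun x => ∑ j, q j * φ j x - q i * φ i x) =o[l] φ i := by
  have herase : (fun x => ∑ j, q j * φ j x - q i * φ i x) =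
      fun x => ∑ j ∈ Finset.univ.erase i, q j * φ j x := by
    funext x
    rw [← Finset.sum_erase_add _ _ (Finset.mem_univ i), add_sub_cancel_right]
  rw [herase]
  refine IsLittleO.fun_sum fun j hj => ?_
  rcases (Finset.ne_of_mem_erase hj).lt_or_gt with hji | hij
  · exact (hφ j i hji).const_mul_left (q j)
  · simp [hq j hij]

lemma eventually_sum_le_half_leading (hφ : ∀ i j, i < j → φ i =o[l] φ j)
    (hq : ∀ j, i < j → q j = 0) (hneg : q i < 0) (hφi : ∀ᶠ x in l, 0 ≤ φ i x) :
    ∀ᶠ x in l, ∑ j, q j * φ j x ≤ q i / 2 * φ i x := by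
  filter_upwards [(isLittleO_sum_sub_leading hφ hq).bound (by linarith : 0 < -q i / 2), hφi]
    with x hx hx0
  rw [norm_eq_abs, norm_of_nonneg hx0] at hx
  linarith [(abs_le.1 hx).2]

lemma eventually_sum_nonneg_of_not_exists_leading_neg (hφ : ∀ i j, i < j → φ i =o[l] φ j)
    (hφ0 : ∀ i, ∀ᶠ x in l, 0 ≤ φ i x) (h : ¬ ∃ i, (∀ j, i < j → q j = 0) ∧ q i < 0) :
    ∀ᶠ x in l, 0 ≤ ∑ j, q j * φ j x := by
  by_cases hzero : q = 0
  · simp [hzero]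
  obtain ⟨i, hi, hmax⟩ :=
    Set.exists_max_image {j | q j ≠ 0} id (Set.toFinite _) (Function.ne_iff.1 hzero)
  have hlead : ∀ j, i < j → q j = 0 := fun j hij => by_contra fun hj => (hmax j hj).not_gt hij
  have hpos : 0 < q i := (Ne.lt_or_gt hi).resolve_left fun hneg => h ⟨i, hlead, hneg⟩
  filter_upwards [eventually_sum_le_half_leading (q := -q) hφ (by simpa using hlead)
    (by simpa using hpos) (hφ0 i), hφ0 i] with x hx hx0
  simp only [Pi.neg_apply, neg_mul, Finset.sum_neg_distrib] at hx
  nlinarith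

end Asymptotics

section Integrals

lemma setLIntegral_Ioi_eq_top_of_eventually_one_le {F : ℝ → ℝ≥0∞} {a : ℝ}
    (h : ∀ᶠ x in atTop, 1 ≤ F x) : ∫⁻ x in Ioi a, F x = ⊤ := by
  obtain ⟨X, hX⟩ := eventually_atTop.1 h
  refine top_unique ?_
  calc ⊤ = ∫⁻ _ in Ioi (max X a), 1 := by rw [setLIntegral_one, volume_Ioi]
    _ ≤ ∫⁻ x in Ioi (max X a), F x :=
      setLIntegral_mono' measurableSet_Ioi fun x hx => hX x ((le_max_left _ _).trans hx.le)
    _ ≤ ∫⁻ x in Ioi a, F x := lintegral_mono_set (Ioi_subset_Ioi (le_max_right _ _))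

lemma setLIntegral_Ioi_lt_top_of_bounded_of_eventually_le {F G : ℝ → ℝ≥0∞} {a : ℝ}
    (hbdd : ∀ X, ∃ C ≠ ⊤, ∀ x ∈ Ioc a X, F x ≤ C) (hle : ∀ᶠ x in atTop, F x ≤ G x)
    (hG : ∫⁻ x in Ioi a, G x < ⊤) : ∫⁻ x in Ioi a, F x < ⊤ := by
  obtain ⟨X₀, hX₀⟩ := eventually_atTop.1 hle
  obtain ⟨C, hC, hFC⟩ := hbdd (max X₀ a)
  rw [← Ioc_union_Ioi_eq_Ioi (le_max_right X₀ a),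
    lintegral_union measurableSet_Ioi Ioc_disjoint_Ioi_same]
  refine ENNReal.add_lt_top.2 ⟨?_, ?_⟩
  · calc ∫⁻ x in Ioc a (max X₀ a), F x ≤ ∫⁻ _ in Ioc a (max X₀ a), C :=
          setLIntegral_mono' measurableSet_Ioc hFC
      _ < ⊤ := by
        rw [setLIntegral_const, volume_Ioc]
        exact ENNReal.mul_lt_top hC.lt_top ENNReal.ofReal_lt_top
  · calc ∫⁻ x in Ioi (max X₀ a), F x ≤ ∫⁻ x in Ioi (max X₀ a), G x :=
          setLIntegral_mono' measurableSet_Ioi fun x hx => hX₀ x ((le_max_left _ _).trans hx.le)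
      _ ≤ ∫⁻ x in Ioi a, G x := lintegral_mono_set (Ioi_subset_Ioi (le_max_right _ _))
      _ < ⊤ := hG

lemma lintegral_ofReal_exp_withDensity_lt_top_iff {α : Type*} [MeasurableSpace α]
    {μ : Measure α} {c : ℝ} (hc : 0 < c) {ψ : α → ℝ} (hψ : AEMeasurable ψ μ) (g : α → ℝ) :
    ∫⁻ x, ENNReal.ofReal (exp (g x)) ∂μ.withDensity (fun x => ENNReal.ofReal (c * exp (-ψ x)))
      < ⊤ ↔ ∫⁻ x, ENNReal.ofReal (exp (g x - ψ x)) ∂μ < ⊤ := by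
  have hdens : AEMeasurable (fun x => ENNReal.ofReal (c * exp (-ψ x))) μ :=
    ENNReal.measurable_ofReal.comp_aemeasurable
      (aemeasurable_const.mul (measurable_exp.comp_aemeasurable hψ.neg))
  rw [lintegral_withDensity_eq_lintegral_mul_non_measurable₀ _ hdens
      (ae_of_all _ fun _ => ENNReal.ofReal_lt_top)]
  have hpoint : ∀ x, ENNReal.ofReal (c * exp (-ψ x)) * ENNReal.ofReal (exp (g x)) =
      ENNReal.ofReal c * ENNReal.ofReal (exp (g x - ψ x)) := fun x => by
    rw [← ENNReal.ofReal_mul hc.le, ← ENNReal.ofReal_mul (by positivity), mul_assoc, ← exp_add,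
      neg_add_eq_sub]
  simp_rw [Pi.mul_apply, hpoint]
  rw [lintegral_const_mul' _ _ ENNReal.ofReal_ne_top, lt_top_iff_ne_top, lt_top_iff_ne_top,
    ne_eq, ENNReal.mul_eq_top]
  simp [hc]

lemma sum_mul_le_sum_abs_mul_of_monotoneOn {ι β : Type*} [Fintype ι] [Preorder β] {s : Set β}
    {φ : ι → β → ℝ} (hmono : ∀ i, MonotoneOn (φ i) s) (hpos : ∀ i, ∀ x ∈ s, 0 ≤ φ i x)
    (q : ι → ℝ) {x y : β} (hx : x ∈ s) (hy : y ∈ s) (hxy : x ≤ y) :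
    ∑ i, q i * φ i x ≤ ∑ i, |q i| * φ i y :=
  Finset.sum_le_sum fun i _ => calc
    q i * φ i x ≤ |q i| * φ i x := mul_le_mul_of_nonneg_right (le_abs_self _) (hpos i x hx)
    _ ≤ |q i| * φ i y := mul_le_mul_of_nonneg_left (hmono i hx hy hxy) (abs_nonneg _)

end Integrals

lemma sum_sub_single_mul {ι : Type*} [Fintype ι] [DecidableEq ι] (p f : ι → ℝ) (i₀ : ι) :
    ∑ i, (p - Pi.single i₀ 1 : ι → ℝ) i * f i = ∑ i, p i * f i - f i₀ := by
  simp [sub_mul, Finset.sum_sub_distrib, Pi.single_apply]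

lemma exists_leading_iff_sub_single_zero {k : ℕ} (p : Fin (k + 1) → ℝ) :
    (∃ i : Fin (k + 1), (∀ j, i < j → p j = 0) ∧ (if i = 0 then p 0 < 1 else p i < 0)) ↔
      ∃ i, (∀ j, i < j → (p - Pi.single 0 1 : Fin (k + 1) → ℝ) j = 0) ∧
        (p - Pi.single 0 1 : Fin (k + 1) → ℝ) i < 0 := by
  refine exists_congr fun i => and_congr (forall₂_congr fun j hij => ?_) ?_
  · simp [((Fin.zero_le i).trans_lt hij).ne']
  · split_ifs with hi <;> simp [hi]

theorem lmgf_domain_characterization_general (k : ℕ) (φ : Fin (k + 1) → ℝ → ℝ)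
    (hφcont : ∀ i, ContinuousOn (φ i) (Ioi (0 : ℝ)))
    (hφpos : ∀ i, ∀ x ∈ Ioi (0 : ℝ), 0 < φ i x)
    (hφmono : ∀ i, StrictMonoOn (φ i) (Ioi (0 : ℝ)))
    (hφtop : ∀ i, Tendsto (φ i) atTop atTop)
    (hφint : ∀ i, ∀ c > (0 : ℝ), IntegrableOn (fun x => exp (-(c * φ i x))) (Ioi (0 : ℝ)))
    (hκ : ∃ κ > (1 : ℝ), ∀ i : Fin k, ∀ x ∈ Ioi (0 : ℝ),
      (φ i.castSucc x) ^ κ < φ i.succ x)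
    (Z : ℝ) (hZpos : 0 < Z)
    (lam : Measure ℝ)
    (hlam : lam = (volume.restrict (Ioi (0 : ℝ))).withDensity
      (fun x => ENNReal.ofReal ((1 / Z) * exp (-(φ 0 x)))))
    (p : Fin (k + 1) → ℝ) :
    (∫⁻ x, ENNReal.ofReal (exp (∑ i, p i * φ i x)) ∂lam) < ⊤ ↔
      ∃ i : Fin (k + 1), (∀ j, i < j → p j = 0) ∧
        (if i = 0 then p 0 < 1 else p i < 0) := by
  obtain ⟨κ, hκ, hpow⟩ := hκ
  set q := p - Pi.single 0 1
  have hchain : ∀ i j : Fin (k + 1), i < j → φ i =o[atTop] φ j := fun _ _ =>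
    isLittleO_of_lt_of_isLittleO_succ fun i => isLittleO_of_rpow_le hκ (hφtop _) <|
      (eventually_gt_atTop 0).mono fun x hx => (hpow i x hx).le
  have hφ0 : ∀ i, ∀ᶠ x in atTop, 0 ≤ φ i x := fun i => (hφtop i).eventually_ge_atTop 0
  have hexp : ∀ x, ∑ i, p i * φ i x - φ 0 x = ∑ i, q i * φ i x := fun x =>
    (sum_sub_single_mul p (φ · x) 0).symm
  rw [hlam, lintegral_ofReal_exp_withDensity_lt_top_iff (one_div_pos.2 hZpos)
    ((hφcont 0).aemeasurable measurableSet_Ioi), exists_leading_iff_sub_single_zero]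
  simp_rw [hexp]
  by_cases hq : ∃ i, (∀ j, i < j → q j = 0) ∧ q i < 0
  · refine iff_of_true ?_ hq
    obtain ⟨i, hlead, hneg⟩ := hq
    refine setLIntegral_Ioi_lt_top_of_bounded_of_eventually_le
      (fun X => ⟨_, ENNReal.ofReal_ne_top, fun x hx => ENNReal.ofReal_le_ofReal <| exp_le_exp.2 <|
        sum_mul_le_sum_abs_mul_of_monotoneOn (fun i => (hφmono i).monotoneOn)
          (fun i x hx => (hφpos i x hx).le) q hx.1 (hx.1.trans_le hx.2) hx.2⟩)
      ?_ (hφint i (-q i / 2) (by linarith)).lintegral_lt_top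
    filter_upwards [eventually_sum_le_half_leading hchain hlead hneg (hφ0 i)] with x hx
    exact ENNReal.ofReal_le_ofReal (exp_le_exp.2 (by linarith))
  · refine iff_of_false (fun hfin => hfin.ne (setLIntegral_Ioi_eq_top_of_eventually_one_le ?_)) hq
    filter_upwards [eventually_sum_nonneg_of_not_exists_leading_neg hchain hφ0 hq] with x hx
    exact ENNReal.one_le_ofReal.2 (one_le_exp hx)

/-- For `λ = (1/Z)e^{-φ₀}dx` on (0,∞) with `φ₀,…,φ_k` positive, continuous,
increasing, tending to `∞`, with `∫ e^{-cφᵢ}dx < ∞` for all `c > 0` and `φᵢ^κ < φ_{i+1}`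
for some `κ > 1`, the integral `∫ e^{Σᵢ pᵢφᵢ} dλ` is finite iff `p` belongs to the set
`D = {p_k<0} ∪ {p_k=0, p_{k-1}<0} ∪ ⋯ ∪ {p_k=⋯=p₁=0, p₀<1}`. -/
theorem lmgf_domain_characterization (k : ℕ) (φ : Fin (k + 1) → ℝ → ℝ)
    (hφcont : ∀ i, ContinuousOn (φ i) (Ioi (0 : ℝ)))
    (hφpos : ∀ i, ∀ x ∈ Ioi (0 : ℝ), 0 < φ i x)
    (hφmono : ∀ i, StrictMonoOn (φ i) (Ioi (0 : ℝ)))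
    (hφtop : ∀ i, Tendsto (φ i) atTop atTop)
    (hφint : ∀ i, ∀ c > (0 : ℝ), IntegrableOn (fun x => exp (-(c * φ i x))) (Ioi (0 : ℝ)))
    (hκ : ∃ κ > (1 : ℝ), ∀ i : Fin k, ∀ x ∈ Ioi (0 : ℝ),
      (φ i.castSucc x) ^ κ < φ i.succ x)
    (Z : ℝ) (hZpos : 0 < Z) (hZdef : Z = ∫ x in Ioi (0 : ℝ), exp (-(φ 0 x)))
    (lam : Measure ℝ)
    (hlam : lam = (volume.restrict (Ioi (0 : ℝ))).withDensity
      (fun x => ENNReal.ofReal ((1 / Z) * exp (-(φ 0 x)))))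
    (p : Fin (k + 1) → ℝ) :
    (∫⁻ x, ENNReal.ofReal (exp (∑ i, p i * φ i x)) ∂lam) < ⊤ ↔
      ∃ i : Fin (k + 1), (∀ j, i < j → p j = 0) ∧
        (if i = 0 then p 0 < 1 else p i < 0) :=
  lmgf_domain_characterization_general k φ hφcont hφpos hφmono hφtop hφint hκ Z hZpos lam hlam p
end

section
/- Let H : ℝ^k → (−∞,∞] be convex and lower semicontinuous with Legendre transform I, and suppose that for some (v₁,…,v_{k-1}) and some (p₁,…,p_{k-1}) with (v₁,…,v_{k-1},g) ∈ ∂H(p₁,…,p_{k-1},0) for a real number g. Then I(v₁,…,v_{k-1},·) is constant on the interval [g, ∞). -/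
open Finset

lemma aux_sum (k : ℕ) (p v : Fin (k+1) → ℝ) (w : ℝ) :
    (∑ i, p i * Function.update v (Fin.last k) w i)
      = (∑ i, p i * v i) + p (Fin.last k) * (w - v (Fin.last k)) := by
  have : ∀ i, p i * Function.update v (Fin.last k) w i
      = p i * v i + (if i = Fin.last k then p (Fin.last k) * (w - v (Fin.last k)) else 0) := by
    intro i
    by_cases h : i = Fin.last k
    · subst h; simp [Function.update]; ring
    · simp [Function.update_of_ne h, h]
  simp_rw [this, Finset.sum_add_distrib, Finset.sum_ite_eq' Finset.univ (Fin.last k)]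
  simp

lemma aux_sup (k : ℕ)
    (H : (Fin (k + 1) → ℝ) → EReal)
    (htop : ∀ q : Fin (k + 1) → ℝ, 0 < q (Fin.last k) → H q = ⊤)
    (q₀ : Fin (k + 1) → ℝ) (hq₀ : q₀ (Fin.last k) = 0)
    (v : Fin (k + 1) → ℝ) (g : ℝ) (hvg : v (Fin.last k) = g)
    (hsub : ∀ q' : Fin (k + 1) → ℝ,
      H q₀ + ((∑ i, v i * (q' i - q₀ i) : ℝ) : EReal) ≤ H q')
    (c : ℝ) (hc : H q₀ = (c : EReal)) (w : ℝ) (hw : g ≤ w) :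
    (⨆ p : Fin (k + 1) → ℝ,
        (((∑ i, p i * Function.update v (Fin.last k) w i : ℝ) : EReal) - H p))
      = ((∑ i, q₀ i * v i : ℝ) : EReal) - (c : EReal) := by
  apply le_antisymm
  · apply iSup_le
    intro p
    rcases le_or_gt (p (Fin.last k)) 0 with hp | hp
    · -- p last ≤ 0
      have hS : (∑ i, p i * Function.update v (Fin.last k) w i) ≤ ∑ i, p i * v i := by
        rw [aux_sum, hvg]
        nlinarith
      have hsub' := hsub p
      rw [hc] at hsub'
      have hsum : (∑ i, v i * (p i - q₀ i)) = (∑ i, p i * v i) - ∑ i, q₀ i * v i := by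
        rw [← Finset.sum_sub_distrib]
        exact Finset.sum_congr rfl fun i _ => by ring
      by_cases htp : H p = ⊤
      · rw [htp, EReal.sub_top]
        exact bot_le
      · have hbp : H p ≠ ⊥ := by
          intro hb
          rw [hb, ← EReal.coe_add] at hsub'
          exact EReal.coe_ne_bot _ (le_bot_iff.mp hsub')
        obtain ⟨d, hHp⟩ : ∃ d : ℝ, H p = (d : EReal) :=
          ⟨(H p).toReal, (EReal.coe_toReal htp hbp).symm⟩
        rw [hHp, ← EReal.coe_add, EReal.coe_le_coe_iff, hsum] at hsub'
        rw [hHp, ← EReal.coe_sub, ← EReal.coe_sub, EReal.coe_le_coe_iff]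
        linarith
    · rw [htop p hp, EReal.sub_top]
      exact bot_le
  · have h := le_iSup (fun p : Fin (k + 1) → ℝ =>
        (((∑ i, p i * Function.update v (Fin.last k) w i : ℝ) : EReal) - H p)) q₀
    have hS : (∑ i, q₀ i * Function.update v (Fin.last k) w i) = ∑ i, q₀ i * v i := by
      rw [aux_sum, hq₀]; ring
    rw [hS, hc] at h
    exact h

/-- Let `H` be convex and lower semicontinuous on `ℝ^{k+1}` with `H = ∞` on
the open half-space where the last coordinate is positive, and let
`I(x) = sup_p (⟨p,x⟩ − H(p))` be its Legendre transform. If `(v₁,…,v_{k-1},g)` is a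
subgradient of `H` at a point `q₀` with last coordinate `0`, then `I(v₁,…,v_{k-1},·)` is
constant on `[g,∞)`. -/
theorem legendre_constant_above_subgradient (k : ℕ)
    (H : (Fin (k + 1) → ℝ) → EReal)
    (hconv : ∀ q q' : Fin (k + 1) → ℝ, ∀ t : ℝ, 0 ≤ t → t ≤ 1 →
      H (t • q + (1 - t) • q') ≤ (t : EReal) * H q + ((1 - t : ℝ) : EReal) * H q')
    (hlsc : LowerSemicontinuous H)
    (htop : ∀ q : Fin (k + 1) → ℝ, 0 < q (Fin.last k) → H q = ⊤)
    (q₀ : Fin (k + 1) → ℝ) (hq₀ : q₀ (Fin.last k) = 0)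
    (v : Fin (k + 1) → ℝ) (g : ℝ) (hvg : v (Fin.last k) = g)
    (hsub : ∀ q' : Fin (k + 1) → ℝ,
      H q₀ + ((∑ i, v i * (q' i - q₀ i) : ℝ) : EReal) ≤ H q') :
    ∀ w z : ℝ, g ≤ w → g ≤ z →
      (⨆ p : Fin (k + 1) → ℝ,
          (((∑ i, p i * Function.update v (Fin.last k) w i : ℝ) : EReal) - H p))
        = ⨆ p : Fin (k + 1) → ℝ,
          (((∑ i, p i * Function.update v (Fin.last k) z i : ℝ) : EReal) - H p) := by
  intro w z hw hz
  by_cases hcb : H q₀ = ⊥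
  case pos =>
    have hc := hcb
    -- both sups are ⊤
    have key : ∀ u : ℝ, (⨆ p : Fin (k + 1) → ℝ,
        (((∑ i, p i * Function.update v (Fin.last k) u i : ℝ) : EReal) - H p)) = ⊤ := by
      intro u
      apply top_le_iff.mp
      have h := le_iSup (fun p : Fin (k + 1) → ℝ =>
          (((∑ i, p i * Function.update v (Fin.last k) u i : ℝ) : EReal) - H p)) q₀
      rw [hc, EReal.coe_sub_bot] at h
      exact h
    rw [key w, key z]
  by_cases hct : H q₀ = ⊤
  case neg =>
    obtain ⟨c, hc⟩ : ∃ c : ℝ, H q₀ = (c : EReal) :=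
      ⟨(H q₀).toReal, (EReal.coe_toReal hct hcb).symm⟩
    rw [aux_sup k H htop q₀ hq₀ v g hvg hsub c hc w hw,
        aux_sup k H htop q₀ hq₀ v g hvg hsub c hc z hz]
  case pos =>
    have hc := hct
    -- H ≡ ⊤, both sups are ⊥
    have hall : ∀ p, H p = ⊤ := by
      intro p
      have h := hsub p
      rw [hc, EReal.top_add_coe] at h
      exact top_le_iff.mp h
    have key : ∀ u : ℝ, (⨆ p : Fin (k + 1) → ℝ,
        (((∑ i, p i * Function.update v (Fin.last k) u i : ℝ) : EReal) - H p)) = ⊥ := by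
      intro u
      simp only [hall, EReal.sub_top, iSup_bot]
    rw [key w, key z]
end
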